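/- Let A, B be positive invertible bounded operators on a Hilbert space with m²A ≤ B ≤ M²A for positive reals m < M. Then Mm·A + B ≤ (M+m)·(A ♯ B) in the Loewner order, where A ♯ B = A^{1/2}(A^{-1/2} B A^{-1/2})^{1/2} A^{1/2}. -/

import Mathlib

set_option synthInstance.maxHeartbeats 1000000
variable {H : Type*} [NormedAddCommGroup H] [InnerProductSpace ℂ H] [CompleteSpace H]

/-- The operator geometric mean `A ♯ B = A^{1/2} (A^{-1/2} B A^{-1/2})^{1/2} A^{1/2}`. -/
noncomputable def geoMean (A B : H →L[ℂ] H) : H →L[ℂ] H :=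
  CFC.sqrt A * CFC.sqrt (Ring.inverse (CFC.sqrt A) * B * Ring.inverse (CFC.sqrt A)) * CFC.sqrt A

open scoped NNReal in
set_option maxHeartbeats 2000000 in
theorem diaz_metcalf_operator (A B : H →L[ℂ] H) (m M : ℝ)
    (hm : 0 < m) (hmM : m < M)
    (hA : 0 ≤ A) (hB : 0 ≤ B) (hAu : IsUnit A) (hBu : IsUnit B)
    (h₁ : m ^ 2 • A ≤ B) (h₂ : B ≤ M ^ 2 • A) :
    (M * m) • A + B ≤ (M + m) • geoMean A B := by
  have hM : 0 < M := hm.trans hmM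
  set S := CFC.sqrt A with hSdef
  have hSnn : (0 : H →L[ℂ] H) ≤ S := CFC.sqrt_nonneg A
  have hSS : S * S = A := CFC.sqrt_mul_sqrt_self A hA
  have hSsa : IsSelfAdjoint S := .of_nonneg hSnn
  have hSu : IsUnit S := by
    obtain ⟨u, hu⟩ := hAu
    have h1 : S * (S * ↑u⁻¹) = 1 := by
      rw [← mul_assoc, hSS, ← hu, Units.mul_inv]
    have h2 : (↑u⁻¹ * S) * S = 1 := by
      rw [mul_assoc, hSS, ← hu, Units.inv_mul]
    have hbc : (↑u⁻¹ * S : H →L[ℂ] H) = S * ↑u⁻¹ := by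
      calc (↑u⁻¹ * S : H →L[ℂ] H) = (↑u⁻¹ * S) * (S * (S * ↑u⁻¹)) := by rw [h1, mul_one]
        _ = ((↑u⁻¹ * S) * S) * (S * ↑u⁻¹) := by simp only [mul_assoc]
        _ = S * ↑u⁻¹ := by rw [h2, one_mul]
    exact ⟨⟨S, S * ↑u⁻¹, h1, by rw [← hbc, h2]⟩, rfl⟩
  set T := Ring.inverse S with hTdef
  have hST : S * T = 1 := Ring.mul_inverse_cancel S hSu
  have hTS : T * S = 1 := Ring.inverse_mul_cancel S hSu
  have hTstar : star T = T := by
    rw [hTdef, ← Ring.inverse_star, hSsa.star_eq]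
  set C := T * B * T with hCdef
  have hCnn : (0 : H →L[ℂ] H) ≤ C := by
    have := star_left_conjugate_nonneg hB T
    rwa [hTstar] at this
  have hCsa : IsSelfAdjoint C := .of_nonneg hCnn
  have hTAT : T * A * T = 1 := by
    rw [← hSS, show T * (S * S) * T = (T * S) * (S * T) by simp only [mul_assoc], hST, hTS,
      mul_one]
  -- transfer the hypotheses through conjugation by T
  have hconj : ∀ X : H →L[ℂ] H, ∀ r : ℝ, T * (r • X) * T = r • (T * X * T) := by
    intro X r
    simp [mul_smul_comm, smul_mul_assoc]
  have h₁' : m ^ 2 • (1 : H →L[ℂ] H) ≤ C := by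
    have := star_left_conjugate_le_conjugate h₁ T
    rwa [hTstar, hconj, hTAT] at this
  have h₂' : C ≤ M ^ 2 • (1 : H →L[ℂ] H) := by
    have := star_left_conjugate_le_conjugate h₂ T
    rwa [hTstar, hconj, hTAT] at this
  -- real spectrum bounds
  have hspec₁ : ∀ x ∈ spectrum ℝ C, m ^ 2 ≤ x := by
    rw [← algebraMap_le_iff_le_spectrum (r := m ^ 2) (a := C) hCsa,
      Algebra.algebraMap_eq_smul_one]
    exact h₁'
  have hspec₂ : ∀ x ∈ spectrum ℝ C, x ≤ M ^ 2 := by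
    rw [← le_algebraMap_iff_spectrum_le (r := M ^ 2) (a := C) hCsa,
      Algebra.algebraMap_eq_smul_one]
    exact h₂'
  set m' : ℝ≥0 := m.toNNReal with hm'def
  set M' : ℝ≥0 := M.toNNReal with hM'def
  have hm'coe : (m' : ℝ) = m := Real.coe_toNNReal m hm.le
  have hM'coe : (M' : ℝ) = M := Real.coe_toNNReal M hM.le
  have hsqrt_cont : ContinuousOn NNReal.sqrt (spectrum ℝ≥0 C) :=
    NNReal.continuous_sqrt.continuousOn
  -- the key inequality via the ℝ≥0 functional calculus
  have key : (M * m) • (1 : H →L[ℂ] H) + C ≤ (M + m) • CFC.sqrt C := by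
    have lhs_eq : (M * m) • (1 : H →L[ℂ] H) + C
        = cfc (fun t : ℝ≥0 => M' * m' + t) C := by
      rw [cfc_add (a := C) (f := fun _ : ℝ≥0 => M' * m') (g := fun t : ℝ≥0 => t)
        (by fun_prop) (by fun_prop), cfc_const _ _ hCnn, cfc_id' ℝ≥0 C hCnn,
        IsScalarTower.algebraMap_apply ℝ≥0 ℝ (H →L[ℂ] H), Algebra.algebraMap_eq_smul_one]
      push_cast [hm'coe, hM'coe]
      rfl
    have rhs_eq : (M + m) • CFC.sqrt C
        = cfc (fun t : ℝ≥0 => (M' + m') * NNReal.sqrt t) C := by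
      rw [cfc_const_mul (M' + m') (fun t : ℝ≥0 => NNReal.sqrt t) C hsqrt_cont,
        ← CFC.sqrt_eq_cfc, NNReal.smul_def]
      push_cast [hm'coe, hM'coe]
      rfl
    rw [lhs_eq, rhs_eq]
    refine cfc_mono (fun x hx => ?_) (by fun_prop) (by fun_prop)
    have hxR : (x : ℝ) ∈ spectrum ℝ C := spectrum.algebraMap_mem ℝ hx
    have hx₁ : m ^ 2 ≤ (x : ℝ) := hspec₁ _ hxR
    have hx₂ : (x : ℝ) ≤ M ^ 2 := hspec₂ _ hxR
    set u := NNReal.sqrt x with hu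
    have hu₁ : m ≤ (u : ℝ) := by
      have : NNReal.sqrt (m' * m') ≤ u := NNReal.sqrt_le_sqrt.mpr <| by
        rw [← NNReal.coe_le_coe]; push_cast [hm'coe]; nlinarith
      rwa [NNReal.sqrt_mul_self, ← NNReal.coe_le_coe, hm'coe] at this
    have hu₂ : (u : ℝ) ≤ M := by
      have : u ≤ NNReal.sqrt (M' * M') := NNReal.sqrt_le_sqrt.mpr <| by
        rw [← NNReal.coe_le_coe]; push_cast [hM'coe]; nlinarith
      rwa [NNReal.sqrt_mul_self, ← NNReal.coe_le_coe, hM'coe] at this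
    have hxval : x = u * u := (NNReal.mul_self_sqrt x).symm
    rw [hxval, ← NNReal.coe_le_coe]
    push_cast [hm'coe, hM'coe]
    nlinarith [mul_nonneg (sub_nonneg.mpr hu₂) (sub_nonneg.mpr hu₁)]
  -- conjugate back by S
  have final := star_left_conjugate_le_conjugate key S
  rw [hSsa.star_eq] at final
  have hSCS : S * C * S = B := by
    rw [hCdef, show S * (T * B * T) * S = (S * T) * (B * (T * S)) by simp only [mul_assoc],
      hST, hTS, one_mul, mul_one]
  have lhs_eq : S * ((M * m) • (1 : H →L[ℂ] H) + C) * S = (M * m) • A + B := by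
    rw [mul_add, add_mul, mul_smul_comm, smul_mul_assoc, mul_one, hSS, hSCS]
  have rhs_eq : S * ((M + m) • CFC.sqrt C) * S = (M + m) • geoMean A B := by
    rw [mul_smul_comm, smul_mul_assoc]
    rfl
  rwa [lhs_eq, rhs_eq] at final
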